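/- Let q ∈ ℕ and χ a Dirichlet character mod q, a coprime to q, d ≥ 1. Then φ(q)|C|² ≤ ∑_{j ∈ (ℤ/qℤ)ˣ} |∑_{h mod q} χ(h) e(a j^d h^d/q)|², where C = ∑_{h mod q} χ(h) e(a h^d/q), and consequently |C|⁴ ≤ ∑_{h,h',j,j' mod q} e(a(h^d − h'^d)(j^d − j'^d)/q). -/

import Mathlib

open BigOperators

/-- `ψ(x) = e(x/q) = exp(2πi x/q)` for `x ∈ ℤ/qℤ`. -/
noncomputable def psi (q : ℕ) [NeZero q] (x : ZMod q) : ℂ :=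
  Complex.exp (2 * (Real.pi : ℂ) * Complex.I * ((x.val : ℂ) / (q : ℂ)))

/-- `C = ∑_{h mod q} χ(h) e(a h^d/q)`. -/
noncomputable def C11 (q : ℕ) [NeZero q] (d : ℕ) (a : ℤ) (χ : DirichletCharacter ℂ q) : ℂ :=
  ∑ h : ZMod q, χ h * psi q ((a : ZMod q) * h ^ d)

/-!
For a unit `j`, the substitution `h ↦ j⁻¹ h` turns `∑_h χ(h) e(a j^d h^d/q)` into `χ(j⁻¹) C`,
so every unit contributes exactly `|C|²`, giving the first claim. Adding the non-units only
increases the sum; expanding the squares, the sum over all `j` becomes the bilinear form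
`∑_{h,h'} χ(h) χ̄(h') W(h,h')` with `W(h,h') = ∑_j e(a(h^d − h'^d) j^d/q)`, which Cauchy–Schwarz
bounds by `φ(q) (∑_{h,h'} |W(h,h')|²)^{1/2}`. Finally `|W(h,h')|²` is the sum over `j, j'`
of `e(a(h^d − h'^d)(j^d − j'^d)/q)`.
-/

open ComplexConjugate

section CauchySchwarz

variable {𝕜 ι κ : Type*} [RCLike 𝕜] [Fintype ι] [Fintype κ]

lemma sum_norm_sq_sum_mul_eq (x : ι → 𝕜) (K : ι → κ → 𝕜) :
    ((∑ j, ‖∑ h, x h * K h j‖ ^ 2 : ℝ) : 𝕜)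
      = ∑ h, ∑ h', x h * conj (x h') * ∑ j, K h j * conj (K h' j) := by
  push_cast
  simp_rw [← RCLike.mul_conj, map_sum, map_mul, Finset.sum_mul_sum, Finset.mul_sum]
  rw [Finset.sum_comm]
  refine Finset.sum_congr rfl fun h _ => ?_
  rw [Finset.sum_comm]
  refine Finset.sum_congr rfl fun h' _ => Finset.sum_congr rfl fun j _ => ?_
  ring

lemma norm_sum_sum_mul_conj_mul_sq_le (x : ι → 𝕜) (M : ι → ι → 𝕜) :
    ‖∑ h, ∑ h', x h * conj (x h') * M h h'‖ ^ 2
      ≤ (∑ h, ‖x h‖ ^ 2) ^ 2 * ∑ h, ∑ h', ‖M h h'‖ ^ 2 := by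
  have htri : ‖∑ h, ∑ h', x h * conj (x h') * M h h'‖
      ≤ ∑ p : ι × ι, (‖x p.1‖ * ‖x p.2‖) * ‖M p.1 p.2‖ := by
    rw [Fintype.sum_prod_type]
    refine (norm_sum_le _ _).trans (Finset.sum_le_sum fun h _ => ?_)
    refine (norm_sum_le _ _).trans_eq (Finset.sum_congr rfl fun h' _ => ?_)
    rw [norm_mul, norm_mul, RCLike.norm_conj]
  calc ‖∑ h, ∑ h', x h * conj (x h') * M h h'‖ ^ 2
      ≤ (∑ p : ι × ι, (‖x p.1‖ * ‖x p.2‖) * ‖M p.1 p.2‖) ^ 2 := by gcongr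
    _ ≤ (∑ p : ι × ι, (‖x p.1‖ * ‖x p.2‖) ^ 2) * ∑ p : ι × ι, ‖M p.1 p.2‖ ^ 2 :=
      Finset.sum_mul_sq_le_sq_mul_sq _ _ _
    _ = (∑ h, ‖x h‖ ^ 2) ^ 2 * ∑ h, ∑ h', ‖M h h'‖ ^ 2 := by
      rw [Fintype.sum_prod_type, Fintype.sum_prod_type]
      simp only [mul_pow, ← Finset.mul_sum, ← Finset.sum_mul]
      ring

lemma sq_sum_norm_sq_sum_mul_le (x : ι → 𝕜) (K : ι → κ → 𝕜) :
    (∑ j, ‖∑ h, x h * K h j‖ ^ 2) ^ 2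
      ≤ (∑ h, ‖x h‖ ^ 2) ^ 2 * ∑ h, ∑ h', ‖∑ j, K h j * conj (K h' j)‖ ^ 2 := by
  have hA : 0 ≤ ∑ j, ‖∑ h, x h * K h j‖ ^ 2 := by positivity
  rw [← RCLike.norm_of_nonneg (K := 𝕜) hA, sum_norm_sq_sum_mul_eq]
  exact norm_sum_sum_mul_conj_mul_sq_le x _

end CauchySchwarz

namespace AddChar

variable {G K ι : Type*} [AddCommGroup G] [Finite G] [RCLike K] [Fintype ι]

lemma map_sub_eq_mul_conj (ψ : AddChar G K) (x y : G) : ψ (x - y) = ψ x * conj (ψ y) := by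
  rw [sub_eq_add_neg, map_add_eq_mul, map_neg_eq_conj]

lemma sum_sum_map_sub_eq_norm_sq (ψ : AddChar G K) (f : ι → G) :
    ∑ i, ∑ j, ψ (f i - f j) = (‖∑ i, ψ (f i)‖ ^ 2 : ℝ) := by
  simp only [RCLike.ofReal_pow, ← RCLike.mul_conj, map_sum, Finset.sum_mul_sum,
    map_sub_eq_mul_conj]

end AddChar

namespace MulChar

variable {R : Type*} [CommRing R] [Fintype R]

lemma sum_mul_comp_unit_mul {R' : Type*} [CommRing R'] (χ : MulChar R R') (F : R → R')
    (u : Rˣ) : ∑ h, χ h * F (u * h) = χ ↑u⁻¹ * ∑ h, χ h * F h := by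
  calc ∑ h, χ h * F (u * h) = ∑ h, χ ↑u⁻¹ * (χ (u * h) * F (u * h)) := by
        refine Finset.sum_congr rfl fun h _ => ?_
        rw [← mul_assoc, ← map_mul, Units.inv_mul_cancel_left]
    _ = χ ↑u⁻¹ * ∑ h, χ h * F h := by
        rw [← Finset.mul_sum, u.mulLeft_bijective.sum_comp (fun h => χ h * F h)]

lemma norm_apply_unit (χ : MulChar R ℂ) (u : Rˣ) : ‖χ u‖ = 1 := by
  classical
  rw [← coe_equivToUnitHom]
  exact Complex.norm_eq_one_of_mem_rootsOfUnity (χ.apply_mem_rootsOfUnity u)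

lemma sum_norm_sq_eq_card_units (χ : MulChar R ℂ) : ∑ a, ‖χ a‖ ^ 2 = Nat.card Rˣ := by
  classical
  apply Complex.ofReal_injective
  push_cast
  simp only [← Complex.mul_conj', ← RCLike.star_def, star_apply', ← mul_apply, mul_inv_cancel]
  rw [sum_one_eq_card_units, Fintype.card_eq_nat_card]

end MulChar

section MonomialSum

variable {R : Type*} [CommRing R] [Fintype R] (χ : MulChar R ℂ) (ψ : AddChar R ℂ) (d : ℕ)

noncomputable def monomialSum (b : R) : ℂ := ∑ h, χ h * ψ (b * h ^ d)

lemma monomialSum_mul_unit_pow (a : R) (u : Rˣ) :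
    monomialSum χ ψ d (a * u ^ d) = χ ↑u⁻¹ * monomialSum χ ψ d a := by
  simp only [monomialSum, ← MulChar.sum_mul_comp_unit_mul χ (fun h => ψ (a * h ^ d)) u, mul_pow,
    mul_assoc]

lemma sum_units_norm_sq_monomialSum [DecidableEq R] (a : R) :
    ∑ j : Rˣ, ‖monomialSum χ ψ d (a * j ^ d)‖ ^ 2 = Nat.card Rˣ * ‖monomialSum χ ψ d a‖ ^ 2 := by
  simp only [monomialSum_mul_unit_pow, norm_mul, MulChar.norm_apply_unit, one_mul,
    Finset.sum_const, Finset.card_univ, nsmul_eq_mul, Fintype.card_eq_nat_card]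

lemma card_units_mul_norm_sq_monomialSum_le (a : R) :
    Nat.card Rˣ * ‖monomialSum χ ψ d a‖ ^ 2 ≤ ∑ j, ‖monomialSum χ ψ d (a * j ^ d)‖ ^ 2 := by
  rw [← MulChar.sum_norm_sq_eq_card_units χ, Finset.sum_mul]
  refine Finset.sum_le_sum fun j _ => ?_
  by_cases hj : IsUnit j
  · obtain ⟨u, rfl⟩ := hj
    rw [monomialSum_mul_unit_pow, norm_mul, MulChar.norm_apply_unit, MulChar.norm_apply_unit]
    simp
  · simp [χ.map_nonunit hj]

lemma sum_sum_norm_sq_sum_mul_conj_eq (a : R) :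
    ∑ h, ∑ h', ‖∑ j, ψ (a * j ^ d * h ^ d) * conj (ψ (a * j ^ d * h' ^ d))‖ ^ 2
      = (∑ h, ∑ h', ∑ j, ∑ j', ψ (a * (h ^ d - h' ^ d) * (j ^ d - j' ^ d))).re := by
  have key : ∀ h h' : R, ∑ j, ∑ j', ψ (a * (h ^ d - h' ^ d) * (j ^ d - j' ^ d))
      = (‖∑ j, ψ (a * j ^ d * h ^ d) * conj (ψ (a * j ^ d * h' ^ d))‖ ^ 2 : ℝ) := by
    intro h h'
    simp only [← AddChar.map_sub_eq_mul_conj]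
    refine Eq.trans ?_
      (AddChar.sum_sum_map_sub_eq_norm_sq ψ fun j => a * j ^ d * h ^ d - a * j ^ d * h' ^ d)
    refine Finset.sum_congr rfl fun j _ => Finset.sum_congr rfl fun j' _ => ?_
    ring_nf
  simp only [key, ← Complex.ofReal_sum, Complex.ofReal_re]

lemma norm_monomialSum_pow_four_le (a : R) :
    ‖monomialSum χ ψ d a‖ ^ 4
      ≤ (∑ h, ∑ h', ∑ j, ∑ j', ψ (a * (h ^ d - h' ^ d) * (j ^ d - j' ^ d))).re := by
  set P : ℝ := (Nat.card Rˣ : ℝ)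
  have hP : 0 < P := Nat.cast_pos.2 Nat.card_pos
  have hCS := sq_sum_norm_sq_sum_mul_le (χ : R → ℂ) fun h j => ψ (a * j ^ d * h ^ d)
  rw [MulChar.sum_norm_sq_eq_card_units, sum_sum_norm_sq_sum_mul_conj_eq] at hCS
  refine le_of_mul_le_mul_left ?_ (pow_pos hP 2)
  calc P ^ 2 * ‖monomialSum χ ψ d a‖ ^ 4 = (P * ‖monomialSum χ ψ d a‖ ^ 2) ^ 2 := by ring
    _ ≤ (∑ j, ‖monomialSum χ ψ d (a * j ^ d)‖ ^ 2) ^ 2 := by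
      gcongr
      exact card_units_mul_norm_sq_monomialSum_le χ ψ d a
    _ ≤ P ^ 2 * _ := hCS

end MonomialSum

lemma psi_eq_stdAddChar (q : ℕ) [NeZero q] : psi q = ZMod.stdAddChar := by
  funext x
  rw [ZMod.stdAddChar_apply, ZMod.toCircle_apply]
  simp only [psi]
  ring_nf

theorem stmt11_general (q : ℕ) [NeZero q] (d : ℕ) (a : ℤ) (χ : DirichletCharacter ℂ q) :
    (Nat.totient q : ℝ) * ‖C11 q d a χ‖ ^ 2
      ≤ ∑ j : (ZMod q)ˣ,
          ‖(∑ h : ZMod q, χ h * psi q ((a : ZMod q) * (j : ZMod q) ^ d * h ^ d))‖ ^ 2 ∧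
    ‖C11 q d a χ‖ ^ 4
      ≤ (∑ h : ZMod q, ∑ h' : ZMod q, ∑ j : ZMod q, ∑ j' : ZMod q,
          psi q ((a : ZMod q) * (h ^ d - h' ^ d) * (j ^ d - j' ^ d))).re := by
  have hC : C11 q d a χ = monomialSum χ ZMod.stdAddChar d (a : ZMod q) := by
    rw [C11, psi_eq_stdAddChar]
    rfl
  rw [hC, psi_eq_stdAddChar, ← ZMod.card_units_eq_totient, Fintype.card_eq_nat_card]
  exact ⟨(sum_units_norm_sq_monomialSum χ _ d _).ge, norm_monomialSum_pow_four_le χ _ d _⟩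

/-- One-variable Cauchy–Schwarz argument: `φ(q)|C|² ≤ ∑_{j unit} |∑_h χ(h) e(a j^d h^d/q)|²`,
and consequently `|C|⁴ ≤ ∑_{h,h',j,j'} e(a(h^d − h'^d)(j^d − j'^d)/q)`. -/
theorem stmt11 (q : ℕ) [NeZero q] (d : ℕ) (hd : 1 ≤ d) (a : ℤ) (ha : Int.gcd a q = 1)
    (χ : DirichletCharacter ℂ q) :
    (Nat.totient q : ℝ) * ‖C11 q d a χ‖ ^ 2
      ≤ ∑ j : (ZMod q)ˣ,
          ‖(∑ h : ZMod q, χ h * psi q ((a : ZMod q) * (j : ZMod q) ^ d * h ^ d))‖ ^ 2 ∧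
    ‖C11 q d a χ‖ ^ 4
      ≤ (∑ h : ZMod q, ∑ h' : ZMod q, ∑ j : ZMod q, ∑ j' : ZMod q,
          psi q ((a : ZMod q) * (h ^ d - h' ^ d) * (j ^ d - j' ^ d))).re :=
  stmt11_general q d a χ
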